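/- Let T be a posinormal bounded operator on a Hilbert space such that T*T and TT* commute. Then T² and T³ are posinormal. -/

import Mathlib

/-!
Write `a = T* T`, `b = T T*` and `x ≼ y` for `x ≤ c • y` with some `c ≥ 0`, so that
posinormality is `b ≼ a`. Since `a` and `b` commute and a product of commuting positive
elements is positive, `b ≼ a` passes to powers: `bⁿ ≼ aⁿ`. Conjugation preserves `≼`,
which gives the chain `T² T*² = T b T* ≼ T a T* = b² ≼ a² = T* b T ≼ T* a T = T*² T²`;
the cube goes the same way through `b³ ≼ a³`.
-/

open ContinuousLinearMap

namespace CStarAlgebra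

variable {A : Type*} [CStarAlgebra A] [PartialOrder A] [StarOrderedRing A]

lemma pow_le_pow_left_of_commute {a b : A} (hb : 0 ≤ b) (hba : b ≤ a) (hab : Commute a b)
    (n : ℕ) : b ^ n ≤ a ^ n := by
  induction n with
  | zero => simp
  | succ n ih =>
    have hdiff : a ^ (n + 1) - b ^ (n + 1) = a ^ n * (a - b) + (a ^ n - b ^ n) * b := by
      simp only [pow_succ, mul_sub, sub_mul]
      abel
    rw [← sub_nonneg, hdiff]
    exact add_nonneg
      ((((Commute.refl a).sub_right hab).pow_left n).mul_nonneg
        (pow_nonneg (hb.trans hba) n) (sub_nonneg.mpr hba))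
      (((hab.pow_left n).sub_left ((Commute.refl b).pow_left n)).mul_nonneg
        (sub_nonneg.mpr ih) hb)

end CStarAlgebra

section Domination

variable {A : Type*} [CStarAlgebra A] [PartialOrder A] [StarOrderedRing A]

def IsDominatedBy (x y : A) : Prop := ∃ c : ℝ, 0 ≤ c ∧ x ≤ c • y

local infix:50 " ≼ " => IsDominatedBy

namespace IsDominatedBy

variable {x y z : A}

lemma trans (hxy : x ≼ y) (hyz : y ≼ z) : x ≼ z := by
  obtain ⟨c, hc, hxy⟩ := hxy
  obtain ⟨d, hd, hyz⟩ := hyz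
  exact ⟨c * d, mul_nonneg hc hd,
    hxy.trans (by rw [mul_smul]; exact smul_le_smul_of_nonneg_left hyz hc)⟩

instance : @Trans A A A IsDominatedBy IsDominatedBy IsDominatedBy := ⟨trans⟩

lemma conj (h : x ≼ y) (p : A) : p * x * star p ≼ p * y * star p := by
  obtain ⟨c, hc, h⟩ := h
  exact ⟨c, hc, by simpa only [mul_smul_comm, smul_mul_assoc] using
    star_right_conjugate_le_conjugate h p⟩

lemma pow (h : x ≼ y) (hx : 0 ≤ x) (hyx : Commute y x) (n : ℕ) : x ^ n ≼ y ^ n := by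
  obtain ⟨c, hc, h⟩ := h
  exact ⟨c ^ n, pow_nonneg hc n, by
    simpa only [smul_pow] using CStarAlgebra.pow_le_pow_left_of_commute hx h (hyx.smul_left c) n⟩

end IsDominatedBy

def IsPosinormal (t : A) : Prop := t * star t ≼ star t * t

namespace IsPosinormal

variable {t : A}

theorem pow_two (ht : IsPosinormal t) (hcomm : Commute (star t * t) (t * star t)) :
    IsPosinormal (t ^ 2) := by
  calc t ^ 2 * star (t ^ 2) = t * (t * star t) * star t := by simp [pow_succ, mul_assoc]
    _ ≼ t * (star t * t) * star t := ht.conj t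
    _ = (t * star t) ^ 2 := by simp [pow_succ, mul_assoc]
    _ ≼ (star t * t) ^ 2 := ht.pow (mul_star_self_nonneg t) hcomm 2
    _ = star t * (t * star t) * star (star t) := by simp [pow_succ, mul_assoc]
    _ ≼ star t * (star t * t) * star (star t) := ht.conj (star t)
    _ = star (t ^ 2) * t ^ 2 := by simp [pow_succ, mul_assoc]

theorem pow_three (ht : IsPosinormal t) (hcomm : Commute (star t * t) (t * star t)) :
    IsPosinormal (t ^ 3) := by
  have hsq : (t * star t) ^ 2 ≼ (star t * t) ^ 2 := ht.pow (mul_star_self_nonneg t) hcomm 2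
  have hcube : (t * star t) ^ 3 ≼ (star t * t) ^ 3 := ht.pow (mul_star_self_nonneg t) hcomm 3
  calc t ^ 3 * star (t ^ 3) = t ^ 2 * (t * star t) * star (t ^ 2) := by
        simp [pow_succ, mul_assoc]
    _ ≼ t ^ 2 * (star t * t) * star (t ^ 2) := ht.conj _
    _ = t * (t * star t) ^ 2 * star t := by simp [pow_succ, mul_assoc]
    _ ≼ t * (star t * t) ^ 2 * star t := hsq.conj t
    _ = (t * star t) ^ 3 := by simp [pow_succ, mul_assoc]
    _ ≼ (star t * t) ^ 3 := hcube
    _ = star t * (t * star t) ^ 2 * star (star t) := by simp [pow_succ, mul_assoc]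
    _ ≼ star t * (star t * t) ^ 2 * star (star t) := hsq.conj (star t)
    _ = star t ^ 2 * (t * star t) * star (star t ^ 2) := by simp [pow_succ, mul_assoc]
    _ ≼ star t ^ 2 * (star t * t) * star (star t ^ 2) := ht.conj _
    _ = star (t ^ 3) * t ^ 3 := by simp [pow_succ, mul_assoc]

end IsPosinormal

end Domination

namespace ContinuousLinearMap

variable {H : Type*} [NormedAddCommGroup H] [InnerProductSpace ℂ H] [CompleteSpace H]

lemma star_mul_self_le_smul_star_mul_self_iff {S R : H →L[ℂ] H} {c : ℝ} :
    star S * S ≤ c • (star R * R) ↔ ∀ x, ‖S x‖ ^ 2 ≤ c * ‖R x‖ ^ 2 := by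
  have hsa : IsSelfAdjoint (c • (star R * R) - star S * S) :=
    ((IsSelfAdjoint.all c).smul (.star_mul_self R)).sub (.star_mul_self S)
  simp only [le_def, isPositive_def', hsa, true_and, reApplyInnerSelf_apply, sub_apply,
    inner_sub_left, map_sub, sub_nonneg]
  refine forall_congr' fun x => ?_
  rw [apply_norm_sq_eq_inner_adjoint_left, apply_norm_sq_eq_inner_adjoint_left, smul_apply,
    RCLike.real_smul_eq_coe_smul (K := ℂ), inner_smul_real_left, RCLike.smul_re]
  rfl

lemma isDominatedBy_star_mul_self_iff {S R : H →L[ℂ] H} :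
    IsDominatedBy (star S * S) (star R * R) ↔
      ∃ α : ℝ, 0 ≤ α ∧ ∀ x, ‖S x‖ ≤ α * ‖R x‖ := by
  simp only [IsDominatedBy, star_mul_self_le_smul_star_mul_self_iff]
  constructor
  · rintro ⟨c, hc, h⟩
    refine ⟨√c, Real.sqrt_nonneg c, fun x => ?_⟩
    calc ‖S x‖ = √(‖S x‖ ^ 2) := (Real.sqrt_sq (norm_nonneg _)).symm
      _ ≤ √(c * ‖R x‖ ^ 2) := Real.sqrt_le_sqrt (h x)
      _ = √c * ‖R x‖ := by rw [Real.sqrt_mul hc, Real.sqrt_sq (norm_nonneg _)]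
  · rintro ⟨α, hα, h⟩
    exact ⟨α ^ 2, sq_nonneg α, fun x => by
      rw [← mul_pow]; exact pow_le_pow_left₀ (norm_nonneg _) (h x) 2⟩

lemma isPosinormal_iff (T : H →L[ℂ] H) :
    IsPosinormal T ↔ ∃ α : ℝ, 0 ≤ α ∧ ∀ x, ‖adjoint T x‖ ≤ α * ‖T x‖ := by
  rw [← isDominatedBy_star_mul_self_iff, star_eq_adjoint, adjoint_adjoint]
  rfl

end ContinuousLinearMap

/-- If `T` is posinormal and `T* T` commutes with `T T*`, then `T²` and `T³` are
posinormal. -/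
theorem sq_cube_posinormal_of_commute {H : Type*} [NormedAddCommGroup H]
    [InnerProductSpace ℂ H] [CompleteSpace H] (T : H →L[ℂ] H)
    (hpos : ∃ α : ℝ, 0 ≤ α ∧ ∀ x : H, ‖adjoint T x‖ ≤ α * ‖T x‖)
    (hcomm : (adjoint T ∘L T) ∘L (T ∘L adjoint T)
      = (T ∘L adjoint T) ∘L (adjoint T ∘L T)) :
    (∃ γ : ℝ, 0 ≤ γ ∧ ∀ x : H, ‖(adjoint T ^ 2) x‖ ≤ γ * ‖(T ^ 2) x‖) ∧
    (∃ γ : ℝ, 0 ≤ γ ∧ ∀ x : H, ‖(adjoint T ^ 3) x‖ ≤ γ * ‖(T ^ 3) x‖) := by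
  have hT : IsPosinormal T := (isPosinormal_iff T).mpr hpos
  have hcomm' : Commute (star T * T) (T * star T) := hcomm
  have hadj (n : ℕ) : adjoint (T ^ n) = adjoint T ^ n := star_pow T n
  rw [← hadj, ← hadj, ← isPosinormal_iff, ← isPosinormal_iff]
  exact ⟨hT.pow_two hcomm', hT.pow_three hcomm'⟩
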